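/- arXiv:1508.00178 — 3 statements merged into one kernel-verified Lean document; each statement's English description precedes it below -/
import Mathlib

section
/- Let G be a finite group of order 2d with a central element c of order 2, and call Φ ⊆ G a CM type if Φ ⊔ cΦ = G. For s ∈ G one has Σ_Φ |Φ ∩ sΦ| (sum over all CM types Φ) equal to d·2^d if s = 1, equal to 0 if s = c, and equal to d·2^{d-1} otherwise. -/
/-! Left multiplication by `c` is a fixed-point-free involution of `G`, and the CM types are
exactly the sets meeting each of its orbits `{g, cg}` in one point. Fixing one CM type `Φ₀`, every
CM type is determined by its intersection with `Φ₀`, so there are `2^d` of them, each of size `d`;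
this is the case `s = 1`, and `Φ ∩ cΦ = ∅` is the case `s = c`. Otherwise count the pairs `(Φ, g)`
with `g, s⁻¹g ∈ Φ` by `g`: since `s⁻¹g ∉ {g, cg}`, toggling the orbit of `s⁻¹g` is an involution
of the CM types containing `g` that exchanges those containing `s⁻¹g` with the others. So each `g`
contributes half of the CM types containing it, and in total half of `∑_Φ |Φ| = d·2^d`. -/

/-- The set of CM types of a finite group `G` with respect to a central element `c`
of order `2`: subsets `Φ ⊆ G` with `Φ` and `cΦ` disjoint with union `G`. -/
def cmTypes (G : Type*) [Group G] [Fintype G] [DecidableEq G] (c : G) :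
    Finset (Finset G) :=
  Finset.univ.filter
    (fun Φ => Disjoint Φ (Φ.image (c * ·)) ∧ Φ ∪ Φ.image (c * ·) = Finset.univ)

open Finset Function

section Involution

variable {α : Type*} [DecidableEq α] {f : α → α}

lemma mem_image_of_involutive (hf : Involutive f) {S : Finset α} {x : α} :
    x ∈ S.image f ↔ f x ∈ S := by
  constructor
  · intro h
    obtain ⟨y, hy, rfl⟩ := mem_image.1 h
    rwa [hf y]
  · exact fun h => mem_image.2 ⟨f x, h, hf x⟩

variable [Fintype α]

lemma sum_card_filter_mem (𝒯 : Finset (Finset α)) :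
    ∑ x, #{Φ ∈ 𝒯 | x ∈ Φ} = ∑ Φ ∈ 𝒯, #Φ := by
  simpa [bipartiteAbove, bipartiteBelow] using
    sum_card_bipartiteAbove_eq_sum_card_bipartiteBelow (s := univ) (t := 𝒯) (r := (· ∈ ·))

def transversals (f : α → α) : Finset (Finset α) := {Φ | ∀ x, x ∈ Φ ↔ f x ∉ Φ}

@[simp]
lemma mem_transversals {Φ : Finset α} : Φ ∈ transversals f ↔ ∀ x, x ∈ Φ ↔ f x ∉ Φ := by
  simp [transversals]

lemma image_eq_compl_of_mem_transversals (hf : Involutive f) {Φ : Finset α}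
    (hΦ : Φ ∈ transversals f) : Φ.image f = Φᶜ := by
  ext x
  have := mem_transversals.1 hΦ x
  rw [mem_image_of_involutive hf, mem_compl]
  tauto

lemma two_mul_card_of_mem_transversals (hf : Involutive f) {Φ : Finset α}
    (hΦ : Φ ∈ transversals f) : 2 * #Φ = Fintype.card α := by
  have himage := card_image_of_injective Φ hf.injective
  rw [image_eq_compl_of_mem_transversals hf hΦ, card_compl] at himage
  have := card_le_univ Φ
  omega

lemma transversals_nonempty (hf : Involutive f) (hfix : ∀ x, f x ≠ x) :
    (transversals f).Nonempty := by
  let e := Fintype.equivFin α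
  refine ⟨({x | e x < e (f x)} : Finset α), mem_transversals.2 fun x => ?_⟩
  have hne : e x ≠ e (f x) := e.injective.ne (hfix x).symm
  simp only [mem_filter, mem_univ, true_and, hf x, not_lt]
  exact hne.le_iff_lt.symm

lemma symmDiff_mem_transversals {Φ T : Finset α} (hΦ : Φ ∈ transversals f)
    (hT : ∀ x, x ∈ T ↔ f x ∈ T) : symmDiff Φ T ∈ transversals f := by
  rw [mem_transversals] at hΦ ⊢
  intro x
  have := hΦ x
  have := hT x
  simp only [mem_symmDiff]
  tauto

lemma card_transversals_eq_two_pow (hf : Involutive f) {Φ₀ : Finset α}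
    (hΦ₀ : Φ₀ ∈ transversals f) : #(transversals f) = 2 ^ #Φ₀ := by
  rw [← card_powerset]
  have h₀ := mem_transversals.1 hΦ₀
  refine card_nbij' (· ∩ Φ₀) (fun S => S ∪ (Φ₀ \ S).image f) ?_ ?_ ?_ ?_
  · intro Ψ _
    simp
  · intro S hS
    have hS : S ⊆ Φ₀ := by simpa using hS
    simp only [mem_coe, mem_transversals, mem_union, mem_sdiff, mem_image_of_involutive hf, hf _]
    intro x
    have := h₀ x
    have := @hS x
    have := @hS (f x)
    tauto
  · intro Ψ hΨ
    have hΨ := mem_transversals.1 hΨ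
    ext x
    have := h₀ x
    have := hΨ x
    simp only [mem_union, mem_inter, mem_sdiff, mem_image_of_involutive hf]
    tauto
  · intro S hS
    have hS : S ⊆ Φ₀ := by simpa using hS
    ext x
    have := h₀ x
    have := @hS x
    simp only [mem_union, mem_inter, mem_sdiff, mem_image_of_involutive hf]
    tauto

lemma two_mul_card_filter_mem_mem (hf : Involutive f) {a b : α} (hab : a ≠ b)
    (hafb : a ≠ f b) :
    2 * #{Φ ∈ transversals f | a ∈ Φ ∧ b ∈ Φ} = #{Φ ∈ transversals f | a ∈ Φ} := by
  set T : Finset α := {b, f b}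
  have hT : ∀ x, x ∈ T ↔ f x ∈ T := fun x => by
    simp only [T, mem_insert, mem_singleton, hf.eq_iff, hf b]
    tauto
  have haT : a ∉ T := by simp [T, hab, hafb]
  have hbT : b ∈ T := by simp [T]
  have hflip : #{Φ ∈ transversals f | a ∈ Φ ∧ b ∈ Φ}
      = #{Φ ∈ transversals f | a ∈ Φ ∧ b ∉ Φ} := by
    refine card_nbij' (symmDiff · T) (symmDiff · T) ?_ ?_
      (fun Φ _ => symmDiff_symmDiff_cancel_right T Φ)
      (fun Φ _ => symmDiff_symmDiff_cancel_right T Φ) <;>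
    · intro Φ hΦ
      simp only [mem_coe, mem_filter, mem_symmDiff] at hΦ ⊢
      exact ⟨symmDiff_mem_transversals hΦ.1 hT, by tauto, by tauto⟩
  rw [← card_filter_add_card_filter_not (s := {Φ ∈ transversals f | a ∈ Φ}) (b ∈ ·),
    filter_filter, filter_filter]
  omega

end Involution

section Group

variable {G : Type*} [Group G] [Fintype G] [DecidableEq G]

lemma cmTypes_eq_transversals {c : G} (hc2 : c ^ 2 = 1) : cmTypes G c = transversals (c * ·) := by
  have hc : c⁻¹ = c := inv_eq_of_mul_eq_one_right (by rw [← sq, hc2])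
  ext Φ
  simp only [cmTypes, mem_filter, mem_univ, true_and, mem_transversals, disjoint_left,
    eq_univ_iff_forall, mem_union, image_mul_left, mem_preimage, hc]
  constructor
  · rintro ⟨hdisj, hcover⟩ x
    exact ⟨fun hx => hdisj hx, (hcover x).resolve_right⟩
  · intro h
    exact ⟨fun x => (h x).1, fun x => by have := h x; tauto⟩

lemma sum_card_inter_image_mul_left (𝒯 : Finset (Finset G)) (s : G) :
    ∑ Φ ∈ 𝒯, #(Φ ∩ Φ.image (s * ·)) = ∑ g, #{Φ ∈ 𝒯 | g ∈ Φ ∧ s⁻¹ * g ∈ Φ} := by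
  have h := sum_card_bipartiteAbove_eq_sum_card_bipartiteBelow
    (s := univ) (t := 𝒯) (r := fun g Φ => g ∈ Φ ∧ s⁻¹ * g ∈ Φ)
  refine (sum_congr rfl fun Φ _ => congrArg card ?_).trans h.symm
  ext g
  simp [bipartiteBelow]

end Group

theorem stmt2_general {G : Type*} [Group G] [Fintype G] [DecidableEq G] (d : ℕ)
    (hG : Fintype.card G = 2 * d) (c : G) (hc2 : c ^ 2 = 1) (hc1 : c ≠ 1)
    (s : G) :
    (s = 1 →
      ∑ Φ ∈ cmTypes G c, (Φ ∩ Φ.image (s * ·)).card = d * 2 ^ d) ∧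
    (s = c →
      ∑ Φ ∈ cmTypes G c, (Φ ∩ Φ.image (s * ·)).card = 0) ∧
    (s ≠ 1 → s ≠ c →
      ∑ Φ ∈ cmTypes G c, (Φ ∩ Φ.image (s * ·)).card = d * 2 ^ (d - 1)) := by
  have hf : Involutive (c * ·) := fun g => by simp only [← mul_assoc, ← sq, hc2, one_mul]
  have hcard : ∀ Φ ∈ transversals (c * ·), #Φ = d := fun Φ hΦ => by
    have := two_mul_card_of_mem_transversals hf hΦ
    omega
  have hnum : #(transversals (c * ·)) = 2 ^ d := by
    obtain ⟨Φ₀, hΦ₀⟩ := transversals_nonempty hf fun g h => hc1 (mul_eq_right.1 h)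
    rw [card_transversals_eq_two_pow hf hΦ₀, hcard Φ₀ hΦ₀]
  have hsum : ∑ Φ ∈ transversals (c * ·), #Φ = d * 2 ^ d := by
    rw [sum_congr rfl hcard, sum_const, hnum, smul_eq_mul, mul_comm]
  rw [cmTypes_eq_transversals hc2]
  refine ⟨?_, ?_, ?_⟩
  · rintro rfl
    simpa using hsum
  · rintro rfl
    refine sum_eq_zero fun Φ hΦ => ?_
    rw [image_eq_compl_of_mem_transversals hf hΦ, inter_compl, card_empty]
  · intro hs1 hsc
    have hhalf : ∀ g : G, 2 * #{Φ ∈ transversals (c * ·) | g ∈ Φ ∧ s⁻¹ * g ∈ Φ}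
        = #{Φ ∈ transversals (c * ·) | g ∈ Φ} := fun g => by
      refine two_mul_card_filter_mem_mem hf (fun h => hs1 ?_) (fun h => hsc ?_)
      · simpa using h
      · rw [← mul_assoc, right_eq_mul, mul_inv_eq_one] at h
        exact h.symm
    have hdouble : 2 * ∑ Φ ∈ transversals (c * ·), #(Φ ∩ Φ.image (s * ·)) = d * 2 ^ d := by
      rw [sum_card_inter_image_mul_left, mul_sum, sum_congr rfl fun g _ => hhalf g,
        sum_card_filter_mem, hsum]
    have hd : 0 < d := by
      have := Fintype.card_pos (α := G)
      omega
    obtain ⟨k, rfl⟩ := Nat.exists_eq_add_one.2 hd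
    rw [pow_succ] at hdouble
    rw [Nat.add_sub_cancel]
    linarith

/-- For a finite group `G` of order `2d` with a central element `c` of order `2`,
the sum over all CM types `Φ` of `|Φ ∩ sΦ|` equals `d·2^d` if `s = 1`,
`0` if `s = c`, and `d·2^(d-1)` otherwise. -/
theorem stmt2 {G : Type*} [Group G] [Fintype G] [DecidableEq G] (d : ℕ)
    (hG : Fintype.card G = 2 * d) (c : G) (hc2 : c ^ 2 = 1) (hc1 : c ≠ 1)
    (hcen : ∀ g : G, c * g = g * c) (s : G) :
    (s = 1 →
      ∑ Φ ∈ cmTypes G c, (Φ ∩ Φ.image (s * ·)).card = d * 2 ^ d) ∧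
    (s = c →
      ∑ Φ ∈ cmTypes G c, (Φ ∩ Φ.image (s * ·)).card = 0) ∧
    (s ≠ 1 → s ≠ c →
      ∑ Φ ∈ cmTypes G c, (Φ ∩ Φ.image (s * ·)).card = d * 2 ^ (d - 1)) :=
  stmt2_general d hG c hc2 hc1 s
end

section
/- Let K be a field, L = K(α) a finite separable extension of degree n, and N/K a field extension admitting n distinct K-algebra homomorphisms σ₁, …, σₙ : L → N. For a subset Υ of these embeddings, the kernel of the N-algebra homomorphism N ⊗_K L → Π_{σ∈Υ} N, n ⊗ l ↦ (n·σ(l))_σ, is the principal ideal of N ⊗_K L generated by Π_{σ∈Υ} (1 ⊗ α − σ(α) ⊗ 1). -/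
/-!
Evaluation at `1 ⊗ α` makes `N ⊗_K L` a quotient of `N[X]`, because `α` generates `L`. Along this
quotient the evaluation map at `Υ` becomes `p ↦ (p(σ α))_σ`, and the values `σ α` are pairwise
distinct since an embedding is determined by its value at a generator. Hence the kernel upstairs is
generated by `∏ (X - σ α)`, and its image generates the kernel downstairs.
-/

open TensorProduct Polynomial Algebra.TensorProduct

theorem Algebra.TensorProduct.aeval_one_tmul_surjective {R A B : Type*} [CommSemiring R]
    [CommSemiring A] [Semiring B] [Algebra R A] [Algebra R B] {b : B}
    (hb : Algebra.adjoin R {b} = ⊤) :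
    Function.Surjective (aeval ((1 : A) ⊗ₜ[R] b) : A[X] →ₐ[A] A ⊗[R] B) := by
  rw [← AlgHom.range_eq_top, ← Algebra.adjoin_singleton_eq_range_aeval, ← Set.image_singleton]
  exact adjoin_one_tmul_image_eq_top _ hb

theorem Algebra.TensorProduct.productMap_aeval_one_tmul {R A B : Type*} [CommSemiring R]
    [CommSemiring A] [Semiring B] [Algebra R A] [Algebra R B] (σ : B →ₐ[R] A) (b : B)
    (p : A[X]) :
    productMap (AlgHom.id R A) σ (aeval ((1 : A) ⊗ₜ[R] b) p) = p.eval (σ b) := by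
  change productLeftAlgHom (AlgHom.id A A) σ _ = _
  rw [← aeval_algHom_apply, coe_aeval_eq_eval]
  simp

theorem Polynomial.prod_X_sub_C_dvd_iff {ι F : Type*} [Field F] {s : Finset ι} {v : ι → F}
    (hv : Set.InjOn v s) {p : F[X]} :
    ∏ i ∈ s, (X - C (v i)) ∣ p ↔ ∀ i ∈ s, p.eval (v i) = 0 := by
  refine ⟨fun h i hi => ?_, fun h => Finset.prod_dvd_of_coprime ?_ fun i hi => ?_⟩
  · exact dvd_iff_isRoot.mp ((Finset.dvd_prod_of_mem (fun i => X - C (v i)) hi).trans h)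
  · intro i hi j hj hij
    exact isCoprime_X_sub_C_of_isUnit_sub (sub_ne_zero_of_ne (hv.ne hi hj hij)).isUnit
  · exact dvd_iff_isRoot.mpr (h i hi)

theorem stmt11_general {K L N : Type*} [Field K] [Field L] [Field N]
    [Algebra K L] [Algebra K N]
    (α : L) (hα : Algebra.adjoin K {α} = ⊤)
    (Υ : Finset (L →ₐ[K] N)) :
    RingHom.ker (Pi.algHom K (fun _ : Υ => N)
        (fun σ => Algebra.TensorProduct.productMap (AlgHom.id K N) σ.1) :
          N ⊗[K] L →+* (Υ → N))
      = Ideal.span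
          {∏ σ ∈ Υ, ((1 : N) ⊗ₜ[K] α - σ α ⊗ₜ[K] (1 : L))} := by
  set Ψ : N ⊗[K] L →+* (Υ → N) := ↑(Pi.algHom K (fun _ : Υ => N)
    (fun σ => Algebra.TensorProduct.productMap (AlgHom.id K N) σ.1))
  set φ : N[X] →+* N ⊗[K] L := ↑(aeval ((1 : N) ⊗ₜ[K] α) : N[X] →ₐ[N] N ⊗[K] L)
  have hinj : Set.InjOn (fun σ : L →ₐ[K] N => σ α) Υ := fun σ _ τ _ h =>
    AlgHom.ext_of_adjoin_eq_top hα (Set.eqOn_singleton.mpr h)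
  have hcomap : (RingHom.ker Ψ).comap φ = Ideal.span {∏ σ ∈ Υ, (X - C (σ α))} := by
    ext p
    simp [Ψ, φ, Ideal.mem_span_singleton, Polynomial.prod_X_sub_C_dvd_iff hinj, funext_iff,
      productMap_aeval_one_tmul]
  rw [← Ideal.map_comap_of_surjective φ (aeval_one_tmul_surjective hα) (RingHom.ker Ψ), hcomap,
    Ideal.map_span, Set.image_singleton]
  simp [φ, Algebra.TensorProduct.algebraMap_apply]

/-- For `L = K(α)` finite separable over `K` and `N/K` admitting `n = [L:K]`
distinct `K`-algebra homomorphisms `L → N`, the kernel of the evaluation map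
`N ⊗_K L → ∏_{σ ∈ Υ} N`, `n ⊗ l ↦ (n·σ(l))_σ`, at a subset `Υ` of these
embeddings, is the principal ideal generated by `∏_{σ ∈ Υ} (1 ⊗ α − σ(α) ⊗ 1)`. -/
theorem stmt11 {K L N : Type*} [Field K] [Field L] [Field N]
    [Algebra K L] [Algebra K N] [FiniteDimensional K L] [Algebra.IsSeparable K L]
    (α : L) (hα : Algebra.adjoin K {α} = ⊤)
    (hcard : Fintype.card (L →ₐ[K] N) = Module.finrank K L)
    (Υ : Finset (L →ₐ[K] N)) :
    RingHom.ker (Pi.algHom K (fun _ : Υ => N)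
        (fun σ => Algebra.TensorProduct.productMap (AlgHom.id K N) σ.1) :
          N ⊗[K] L →+* (Υ → N))
      = Ideal.span
          {∏ σ ∈ Υ, ((1 : N) ⊗ₜ[K] α - σ α ⊗ₜ[K] (1 : L))} :=
  stmt11_general α hα Υ
end

section
/- Let E be a field of characteristic 0 with a ring automorphism σ of order 2, let V be a 1-dimensional E-vector space, and let B : V × V → ℚ be a nondegenerate ℚ-bilinear form (on V viewed as a ℚ-vector space) satisfying B(a·x, y) = B(x, σ(a)·y) for all a ∈ E and x, y ∈ V. Extend B ℂ-bilinearly to B_ℂ on ℂ ⊗_ℚ V, and let W ⊆ ℂ ⊗_ℚ V be a nonzero (ℂ ⊗_ℚ E)-submodule. If x ∈ V satisfies B_ℂ(x ⊗ 1, w) = 0 for all w ∈ W, then x = 0. -/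
/-!
On the `E`-line `V`, the `σ`-adjointness of the `E`-action turns left nondegeneracy of `B` into
right nondegeneracy. If `x ≠ 0`, every vector of `V` is `a • x`, and the `E`-stability of `W`
lets `a` move across `B_ℂ`, so a nonzero `w ∈ W` would be orthogonal to all of `1 ⊗ V`;
expanding `w` in a `ℚ`-basis of `ℂ` then forces `w = 0`.
-/

open TensorProduct

namespace LinearMap

variable {R A V : Type*} [CommRing R] [CommRing A] [Algebra R A]
  [AddCommGroup V] [Module R V] {B : LinearMap.BilinForm R V}

theorem IsAdjointPair.baseChange {f g : V →ₗ[R] V} (h : IsAdjointPair B B f g) :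
    IsAdjointPair (B.baseChange A) (B.baseChange A) (f.baseChange A) (g.baseChange A) := by
  intro u u'
  induction u using TensorProduct.induction_on with
  | zero => simp
  | add u₁ u₂ h₁ h₂ => simp only [map_add, add_apply, h₁, h₂]
  | tmul a x =>
    induction u' using TensorProduct.induction_on with
    | zero => simp
    | add u₁ u₂ h₁ h₂ => simp only [map_add, h₁, h₂]
    | tmul a' y => simp only [baseChange_tmul, BilinForm.baseChange_tmul, h x y]

theorem SeparatingRight.eq_zero_of_baseChange_one_tmul_eq_zero [Module.Free R A]
    (hB : B.SeparatingRight) {u : A ⊗[R] V} (hu : ∀ v, B.baseChange A (1 ⊗ₜ v) u = 0) :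
    u = 0 := by
  let b := Module.Free.chooseBasis R A
  obtain ⟨c, rfl⟩ := TensorProduct.eq_repr_basis_left b u
  have hc : ∀ v i, B v (c i) = 0 := fun v => by
    have hv : Finsupp.linearCombination R b (c.mapRange (B v) (map_zero _)) = 0 := by
      rw [Finsupp.linearCombination_apply, Finsupp.sum_mapRange_index (by simp)]
      simpa [Finsupp.sum] using hu v
    simpa using DFunLike.congr_fun (linearIndependent_iff.mp b.linearIndependent _ hv)
  have : c = 0 := Finsupp.ext fun i => hB _ fun v => hc v i
  simp [this]

theorem separatingRight_of_finrank_eq_one {E : Type*} [Field E] [Module E V] (σ : E ≃+* E)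
    (hdim : Module.finrank E V = 1) (hB : B.SeparatingLeft)
    (hσ : ∀ (a : E) (x y : V), B (a • x) y = B x (σ a • y)) : B.SeparatingRight := by
  intro y hy
  by_contra hy0
  refine hy0 (hB y fun z => ?_)
  obtain ⟨a, rfl⟩ := exists_smul_eq_of_finrank_eq_one hdim hy0 z
  rw [← σ.apply_symm_apply a, ← hσ, hy]

end LinearMap

theorem stmt16_general {E V : Type*} [Field E]
    [AddCommGroup V] [Module E V] [Module ℚ V] [IsScalarTower ℚ E V]
    (σ : E ≃+* E)
    (hdim : Module.finrank E V = 1)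
    (B : LinearMap.BilinForm ℚ V) (hB : B.Nondegenerate)
    (hherm : ∀ (a : E) (x y : V), B (a • x) y = B x (σ a • y))
    (W : Submodule ℂ (ℂ ⊗[ℚ] V)) (hW : W ≠ ⊥)
    (hWE : ∀ (a : E), ∀ w ∈ W,
      (LinearMap.baseChange ℂ ((LinearMap.lsmul E V a).restrictScalars ℚ)) w ∈ W)
    (x : V) (hx : ∀ w ∈ W, (B.baseChange ℂ) ((1 : ℂ) ⊗ₜ[ℚ] x) w = 0) :
    x = 0 := by
  by_contra hx0
  obtain ⟨w, hwW, hw0⟩ := Submodule.exists_mem_ne_zero_of_ne_bot hW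
  refine hw0 ((B.separatingRight_of_finrank_eq_one σ hdim hB.1 hherm)
    |>.eq_zero_of_baseChange_one_tmul_eq_zero fun v => ?_)
  obtain ⟨a, rfl⟩ := exists_smul_eq_of_finrank_eq_one hdim hx0 v
  have hadj : LinearMap.IsAdjointPair B B ((LinearMap.lsmul E V a).restrictScalars ℚ)
      ((LinearMap.lsmul E V (σ a)).restrictScalars ℚ) := hherm a
  simpa using (hadj.baseChange (A := ℂ) (1 ⊗ₜ x) w).trans (hx _ (hWE (σ a) w hwW))

/-- Let `E` be a characteristic-zero field with an order-2 automorphism `σ`,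
`V` a 1-dimensional `E`-vector space, and `B` a nondegenerate `ℚ`-bilinear form
on `V` with `B(a•x, y) = B(x, σ(a)•y)`. If `W` is a nonzero `ℂ`-submodule of
`ℂ ⊗_ℚ V` stable under the `E`-action, and `x ∈ V` satisfies
`B_ℂ(x ⊗ 1, w) = 0` for all `w ∈ W`, then `x = 0`. -/
theorem stmt16 {E V : Type*} [Field E] [CharZero E]
    [AddCommGroup V] [Module E V] [Module ℚ V] [IsScalarTower ℚ E V]
    (σ : E ≃+* E) (hσ2 : Function.Involutive σ) (hσ : σ ≠ RingEquiv.refl E)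
    (hdim : Module.finrank E V = 1)
    (B : LinearMap.BilinForm ℚ V) (hB : B.Nondegenerate)
    (hherm : ∀ (a : E) (x y : V), B (a • x) y = B x (σ a • y))
    (W : Submodule ℂ (ℂ ⊗[ℚ] V)) (hW : W ≠ ⊥)
    (hWE : ∀ (a : E), ∀ w ∈ W,
      (LinearMap.baseChange ℂ ((LinearMap.lsmul E V a).restrictScalars ℚ)) w ∈ W)
    (x : V) (hx : ∀ w ∈ W, (B.baseChange ℂ) ((1 : ℂ) ⊗ₜ[ℚ] x) w = 0) :
    x = 0 :=
  stmt16_general σ hdim B hB hherm W hW hWE x hx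
end
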